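/- arXiv:1312.2421 — 3 statements merged into one kernel-verified Lean document; each statement's English description precedes it below -/
import Mathlib

section
/- Let L be a 3×3 matrix of polynomials and K_{ij} the cofactor of L_{ji} (so that the adjugate matrix has entries K_{ij}). If at a point λ₀ a scalar w₀ satisfies L_{31}(λ₀)·w₀ + K_{31}(λ₀) = 0 and L_{32}(λ₀)·w₀ + K_{32}(λ₀) = 0 with (L_{31}(λ₀), L_{32}(λ₀)) ≠ (0,0), then B(λ₀) = 0, where B(λ) = [L_{11}(λ) − L_{22}(λ)]·L_{31}(λ)·L_{32}(λ) − L_{12}(λ)·L_{31}(λ)² + L_{21}(λ)·L_{32}(λ)². -/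
/-! Eliminating `w₀` from the two linear equations gives `L₃₂ K₃₁ - L₃₁ K₃₂ = 0` at `λ₀`, and
expanding the two cofactors shows that `L₃₂ K₃₁ - L₃₁ K₃₂` is exactly `B`. -/

open Polynomial

theorem Matrix.adjugate_fin_three_cross_two {R : Type*} [CommRing R]
    (A : Matrix (Fin 3) (Fin 3) R) :
    A 2 1 * A.adjugate 2 0 - A 2 0 * A.adjugate 2 1 =
      (A 0 0 - A 1 1) * A 2 0 * A 2 1 - A 0 1 * A 2 0 ^ 2 + A 1 0 * A 2 1 ^ 2 := by
  simp only [Matrix.adjugate_fin_three, Matrix.of_apply, Matrix.cons_val, Matrix.cons_val_zero,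
    Matrix.cons_val_one]
  ring

theorem separation_poly_vanishes_general (L : Matrix (Fin 3) (Fin 3) (Polynomial ℂ))
    (K : Matrix (Fin 3) (Fin 3) (Polynomial ℂ)) (hK : K = L.adjugate)
    (lam0 w0 : ℂ)
    (h1 : (L 2 0).eval lam0 * w0 + (K 2 0).eval lam0 = 0)
    (h2 : (L 2 1).eval lam0 * w0 + (K 2 1).eval lam0 = 0) :
    (((L 0 0) - (L 1 1)) * (L 2 0) * (L 2 1)
      - (L 0 1) * (L 2 0) ^ 2 + (L 1 0) * (L 2 1) ^ 2).eval lam0 = 0 := by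
  subst hK
  rw [← L.adjugate_fin_three_cross_two, eval_sub, eval_mul, eval_mul]
  linear_combination (L 2 1).eval lam0 * h1 - (L 2 0).eval lam0 * h2

theorem separation_poly_vanishes (L : Matrix (Fin 3) (Fin 3) (Polynomial ℂ))
    (K : Matrix (Fin 3) (Fin 3) (Polynomial ℂ)) (hK : K = L.adjugate)
    (lam0 w0 : ℂ)
    (h1 : (L 2 0).eval lam0 * w0 + (K 2 0).eval lam0 = 0)
    (h2 : (L 2 1).eval lam0 * w0 + (K 2 1).eval lam0 = 0)
    (hnz : ¬((L 2 0).eval lam0 = 0 ∧ (L 2 1).eval lam0 = 0)) :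
    (((L 0 0) - (L 1 1)) * (L 2 0) * (L 2 1)
      - (L 0 1) * (L 2 0) ^ 2 + (L 1 0) * (L 2 1) ^ 2).eval lam0 = 0 :=
  separation_poly_vanishes_general L K hK lam0 w0 h1 h2
end

section
/- If B(λ₀) = 0 for a 3×3 traceless matrix L(λ₀) with L_{31}(λ₀) ≠ 0 and L_{32}(λ₀) ≠ 0, then w₀ = L_{11}(λ₀) − L_{12}(λ₀)·L_{31}(λ₀)/L_{32}(λ₀) satisfies the spectral curve equation det(L(λ₀) − w₀·I) = 0, i.e., w₀ is an eigenvalue of L(λ₀). -/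
/-! The vector `(L₃₂, -L₃₁, 0)` is annihilated by `L - w₀ I`: the third row vanishes identically,
the first row by the choice of `w₀`, and the second row is `B(λ₀) / L₃₂`. -/

namespace Matrix

variable {R : Type*} [CommRing R] [IsDomain R]

theorem det_fin_three_eq_zero_of_col_dependent (M : Matrix (Fin 3) (Fin 3) R) (h21 : M 2 1 ≠ 0)
    (h0 : M 0 0 * M 2 1 = M 0 1 * M 2 0) (h1 : M 1 0 * M 2 1 = M 1 1 * M 2 0) : M.det = 0 := by
  rw [← exists_mulVec_eq_zero_iff]
  refine ⟨![M 2 1, -M 2 0, 0], fun h ↦ h21 (by simpa using congrFun h 0), ?_⟩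
  ext i
  fin_cases i <;> simp [mulVec, dotProduct, Fin.sum_univ_three]
  · linear_combination h0
  · linear_combination h1
  · ring

end Matrix

theorem sep_variable_on_spectral_curve_general (L : Matrix (Fin 3) (Fin 3) ℂ)
    (h32 : L 2 1 ≠ 0)
    (hB : (L 0 0 - L 1 1) * L 2 0 * L 2 1 - L 0 1 * (L 2 0) ^ 2 + L 1 0 * (L 2 1) ^ 2 = 0)
    (w0 : ℂ) (hw0 : w0 = L 0 0 - L 0 1 * L 2 0 / L 2 1) :
    (L - w0 • (1 : Matrix (Fin 3) (Fin 3) ℂ)).det = 0 := by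
  apply Matrix.det_fin_three_eq_zero_of_col_dependent <;> simp [hw0]
  · exact h32
  · field_simp
  · field_simp
    linear_combination hB

theorem sep_variable_on_spectral_curve (L : Matrix (Fin 3) (Fin 3) ℂ)
    (htr : L.trace = 0)
    (h31 : L 2 0 ≠ 0) (h32 : L 2 1 ≠ 0)
    (hB : (L 0 0 - L 1 1) * L 2 0 * L 2 1 - L 0 1 * (L 2 0) ^ 2 + L 1 0 * (L 2 1) ^ 2 = 0)
    (w0 : ℂ) (hw0 : w0 = L 0 0 - L 0 1 * L 2 0 / L 2 1) :
    (L - w0 • (1 : Matrix (Fin 3) (Fin 3) ℂ)).det = 0 :=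
  sep_variable_on_spectral_curve_general L h32 hB w0 hw0
end

section
/- With the Poisson structure {L_{ij}^{(m)}, L_{kl}^{(n)}} = L_{kj}^{(m+n+1−N)}·δ_{il} − L_{il}^{(m+n+1−N)}·δ_{kj} (terms with index outside 0,…,N−1 set to zero) on polynomials in the variables L_{ij}^{(m)}, the coefficients of (1/2)Tr L(λ)² Poisson-commute with the coefficients of (1/2)Tr L(μ)², where L(λ) = Σ_{m=0}^{N−1} L^{(m)} λ^m + Λ λ^N for any fixed constant matrix Λ. In particular for N = 1 and 3×3 matrices: if L(λ) = L⁰ + Λλ, then {Tr L(λ)², Tr L(μ)²} = 0 for all λ, μ, where the bracket on entries is {L⁰_{ij}, L⁰_{kl}} = L⁰_{kj} δ_{il} − L⁰_{il} δ_{kj}. -/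
open MvPolynomial

/-- The Lie–Poisson bracket `{f,g} = Σ ({L_ij,L_kl}) ∂f/∂L_ij ∂g/∂L_kl` with
`{L_ij,L_kl} = L_kj δ_il − L_il δ_kj`, on polynomial functions of the entries of `L⁰`. -/
noncomputable def liePB (f g : MvPolynomial (Fin 3 × Fin 3) ℂ) :
    MvPolynomial (Fin 3 × Fin 3) ℂ :=
  ∑ i : Fin 3, ∑ j : Fin 3, ∑ k : Fin 3, ∑ l : Fin 3,
    ((if i = l then X (k, j) else 0) - (if k = j then X (i, l) else 0)) *
      pderiv (i, j) f * pderiv (k, l) g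

/-- The `(i,j)` entry of `L(λ) = L⁰ + Λ λ` as a polynomial function of the entries of `L⁰`. -/
noncomputable def Lent (Λ : Matrix (Fin 3) (Fin 3) ℂ) (lam : ℂ) (i j : Fin 3) :
    MvPolynomial (Fin 3 × Fin 3) ℂ :=
  X (i, j) + C (Λ i j * lam)

/-- `Tr L(λ)²` as a polynomial function of the entries of `L⁰`. -/
noncomputable def trLsq (Λ : Matrix (Fin 3) (Fin 3) ℂ) (lam : ℂ) :
    MvPolynomial (Fin 3 × Fin 3) ℂ :=
  ∑ i : Fin 3, ∑ j : Fin 3, Lent Λ lam i j * Lent Λ lam j i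

/-!
The bracket is the Lie–Poisson bracket `{f, g} = tr (L⁰ ⁅∇f, ∇g⁆)`, and `∇ tr L(λ)² = 2 L(λ)`.
Since `L(λ) = L⁰ + λΛ`, the commutator `⁅L(λ), L(μ)⁆ = (μ - λ) ⁅L⁰, Λ⁆`, and
`tr (L⁰ ⁅L⁰, Λ⁆) = 0` by cyclicity of the trace.
-/

open Matrix

theorem Ring.lie_smul_add_smul_smul_add_smul {R A : Type*} [CommRing R] [Ring A] [Algebra R A]
    (x y : A) (a b c d : R) :
    ⁅a • x + b • y, c • x + d • y⁆ = (a * d - b * c) • ⁅x, y⁆ := by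
  simp only [Ring.lie_def, add_mul, mul_add, smul_mul_smul_comm]
  module

section

variable {n R : Type*} [Fintype n] [CommRing R]

theorem Matrix.trace_mul_lie_self (A B : Matrix n n R) : trace (A * ⁅A, B⁆) = 0 := by
  rw [Ring.lie_def, mul_sub, trace_sub, trace_mul_comm A (A * B), mul_assoc, sub_self]

variable [DecidableEq n]

/-- The gradient for the trace pairing: `df = trace (gradMatrix f * dL)`, hence the transpose. -/
noncomputable def gradMatrix (f : MvPolynomial (n × n) R) : Matrix n n (MvPolynomial (n × n) R) :=
  Matrix.of fun i j => pderiv (j, i) f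

theorem gradMatrix_trace_mul_self (A : Matrix n n R) :
    gradMatrix (trace ((mvPolynomialX n n R + A.map C) * (mvPolynomialX n n R + A.map C))) =
      (2 : R) • (mvPolynomialX n n R + A.map C) := by
  ext i j : 1
  simp only [gradMatrix, trace, diag_apply, Matrix.mul_apply, Matrix.add_apply,
    mvPolynomialX_apply, map_apply, map_sum, Derivation.leibniz, map_add, pderiv_X,
    Pi.single_apply, Prod.ext_iff, ite_and, derivation_C, add_zero, smul_eq_mul, mul_ite,
    mul_one, mul_zero, Finset.sum_add_distrib, Finset.sum_ite_eq', Finset.mem_univ, ↓reduceIte,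
    Finset.sum_ite_irrel, Finset.sum_const_zero, of_apply, Matrix.smul_apply, smul_add]
  rw [← smul_add, two_smul]

end

theorem liePB_eq_trace_mul_lie (f g : MvPolynomial (Fin 3 × Fin 3) ℂ) :
    liePB f g = trace (mvPolynomialX (Fin 3) (Fin 3) ℂ * ⁅gradMatrix f, gradMatrix g⁆) := by
  simp only [liePB, gradMatrix, Ring.lie_def, trace, Matrix.mul_apply, Matrix.sub_apply,
    Matrix.of_apply, mvPolynomialX_apply, diag]
  simp only [Fin.sum_univ_succ, Fin.sum_univ_zero]
  norm_num [Fin.ext_iff]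
  ring

theorem trLsq_eq_trace_mul_self (Λ : Matrix (Fin 3) (Fin 3) ℂ) (lam : ℂ) :
    trLsq Λ lam = trace ((mvPolynomialX _ _ ℂ + (lam • Λ).map C) *
      (mvPolynomialX _ _ ℂ + (lam • Λ).map C)) := by
  simp [trLsq, Lent, trace, Matrix.mul_apply, mul_comm lam]

theorem trLsq_involution (Λ : Matrix (Fin 3) (Fin 3) ℂ) (lam mu : ℂ) :
    liePB (trLsq Λ lam) (trLsq Λ mu) = 0 := by
  have map_C_smul (t : ℂ) :
      (t • Λ).map C = t • Λ.map (C : ℂ → MvPolynomial (Fin 3 × Fin 3) ℂ) :=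
    Matrix.map_smul _ t (fun a => by rw [smul_eq_mul, C_mul, smul_eq_C_mul]) Λ
  rw [liePB_eq_trace_mul_lie, trLsq_eq_trace_mul_self, trLsq_eq_trace_mul_self,
    gradMatrix_trace_mul_self, gradMatrix_trace_mul_self, map_C_smul, map_C_smul,
    smul_add, smul_add, smul_smul, smul_smul, Ring.lie_smul_add_smul_smul_add_smul,
    mul_smul_comm, trace_smul, trace_mul_lie_self, smul_zero]
end
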